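/- Let A and B be m×n complex matrices with rank(B) = rank(A), and let E = B − A. Define ε₁ := ‖A†‖₂²‖B†‖₂²·(‖E‖_F² − max{‖BB†EA†‖_F²/‖A†‖₂², ‖B†EA†A‖_F²/‖B†‖₂²}) and ε₂ := ‖A†‖₂²‖B†‖₂²·(‖E‖_F² − max{‖AA†EB†‖_F²/‖B†‖₂², ‖A†EB†B‖_F²/‖A†‖₂²}). Then ‖B† − A†‖_F² ≤ min{ε₁ + ‖B†EA†‖_F², ε₂ + ‖A†EB†‖_F²}. -/

import Mathlib

/-!
With `P_A = A A†`, `Q_A = A† A` (and likewise for `B`) and `E = B - A`,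
`B† - A† = -B† E A† + B† (1 - P_A) - (1 - Q_B) A†` is a sum of three Frobenius-orthogonal
terms. Because `rank A = rank B`, the projections `P_A, P_B` (and `Q_A, Q_B`) have equal trace, so
`‖P_B (1 - P_A)‖_F = ‖(1 - P_B) P_A‖_F`; this turns the last two terms into
`‖B†‖₂ ‖(1 - P_B) E A†‖_F` and `‖A†‖₂ ‖B† E (1 - Q_A)‖_F`. Splitting `E` along `Q_A` (or `P_B`)
and bounding each piece by submultiplicativity gives the two estimates whose minimum is `ε₁`;
the bound with `ε₂` is the same argument with `A` and `B` exchanged.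
-/

open Matrix

/-- The square of the Frobenius norm of a complex matrix. -/
noncomputable def frobSq {α β : Type*} [Fintype α] [Fintype β] (M : Matrix α β ℂ) : ℝ :=
  ∑ i, ∑ j, ‖M i j‖ ^ 2

/-- The spectral norm (ℓ²-operator norm) of a complex matrix. -/
noncomputable def spec {α β : Type*} [Fintype α] [Fintype β] [DecidableEq β]
    (M : Matrix α β ℂ) : ℝ :=
  ‖LinearMap.toContinuousLinearMap (Matrix.toEuclideanLin M)‖

/-- `X` is the Moore–Penrose inverse of `M` (the four Penrose equations). -/
def IsMoorePenrose {α β : Type*} [Fintype α] [Fintype β]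
    (M : Matrix α β ℂ) (X : Matrix β α ℂ) : Prop :=
  M * X * M = M ∧ X * M * X = X ∧ (M * X)ᴴ = M * X ∧ (X * M)ᴴ = X * M

open scoped Matrix.Norms.L2Operator

theorem Matrix.trace_eq_rank_of_isIdempotentElem {K ι : Type*} [Field K] [Fintype ι]
    [DecidableEq ι] {P : Matrix ι ι K} (hP : IsIdempotentElem P) : P.trace = P.rank := by
  have hlin : IsIdempotentElem (toLin' P) := by
    rw [IsIdempotentElem, Module.End.mul_eq_comp, ← toLin'_mul, hP.eq]
  rw [← trace_toLin'_eq, (LinearMap.IsIdempotentElem.isProj_range _ hlin).trace, rank]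
  rfl

variable {α β γ : Type*} [Fintype α] [Fintype β] [Fintype γ]

theorem spec_eq_l2_opNorm [DecidableEq β] (M : Matrix α β ℂ) : spec M = ‖M‖ := rfl

theorem spec_conjTranspose [DecidableEq α] [DecidableEq β] (M : Matrix α β ℂ) :
    spec Mᴴ = spec M :=
  l2_opNorm_conjTranspose M

theorem frobSq_nonneg (M : Matrix α β ℂ) : 0 ≤ frobSq M := by
  unfold frobSq
  positivity

@[simp]
theorem frobSq_neg (M : Matrix α β ℂ) : frobSq (-M) = frobSq M := by
  simp [frobSq]

@[simp]
theorem frobSq_conjTranspose (M : Matrix α β ℂ) : frobSq Mᴴ = frobSq M := by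
  rw [frobSq, Finset.sum_comm]
  simp [frobSq]

theorem frobSq_eq_re_trace (M : Matrix α β ℂ) : frobSq M = (Mᴴ * M).trace.re := by
  rw [frobSq, Finset.sum_comm]
  simp only [trace, diag, mul_apply, conjTranspose_apply, Complex.re_sum, Complex.star_def,
    Complex.conj_mul', ← Complex.ofReal_pow, Complex.ofReal_re]

theorem frobSq_add_of_trace_eq_zero {M N : Matrix α β ℂ} (h : (Mᴴ * N).trace = 0) :
    frobSq (M + N) = frobSq M + frobSq N := by
  have h' : (Nᴴ * M).trace = 0 := by
    rw [← conjTranspose_conjTranspose M, ← conjTranspose_mul, trace_conjTranspose, h, star_zero]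
  simp only [frobSq_eq_re_trace, conjTranspose_add, Matrix.add_mul, Matrix.mul_add, trace_add,
    h, h', Complex.add_re, Complex.zero_re]
  ring

theorem frobSq_mul_le_left [DecidableEq β] (X : Matrix α β ℂ) (M : Matrix β γ ℂ) :
    frobSq (X * M) ≤ spec X ^ 2 * frobSq M := by
  rw [frobSq, frobSq, Finset.sum_comm]
  conv_rhs => rw [Finset.sum_comm, Finset.mul_sum]
  refine Finset.sum_le_sum fun j _ => ?_
  have h := pow_le_pow_left₀ (norm_nonneg _) (l2_opNorm_mulVec X (WithLp.toLp 2 (Mᵀ j))) 2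
  simpa [EuclideanSpace.norm_eq, mul_pow, Real.sq_sqrt, Finset.sum_nonneg, sq_nonneg, mulVec,
    dotProduct, mul_apply, spec_eq_l2_opNorm] using h

theorem frobSq_mul_le_right [DecidableEq α] [DecidableEq β] (M : Matrix γ α ℂ)
    (X : Matrix α β ℂ) : frobSq (M * X) ≤ frobSq M * spec X ^ 2 := by
  have h := frobSq_mul_le_left Xᴴ Mᴴ
  rwa [← conjTranspose_mul, frobSq_conjTranspose, frobSq_conjTranspose, spec_conjTranspose,
    mul_comm] at h

namespace IsStarProjection

variable {P Q : Matrix α α ℂ}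

theorem conjTranspose_eq (hP : IsStarProjection P) : Pᴴ = P := hP.isSelfAdjoint

theorem frobSq_mul_eq_re_trace (hP : IsStarProjection P) (hQ : IsStarProjection Q) :
    frobSq (P * Q) = (P * Q).trace.re := by
  rw [frobSq_eq_re_trace, conjTranspose_mul, hP.conjTranspose_eq, hQ.conjTranspose_eq,
    Matrix.mul_assoc, ← Matrix.mul_assoc P, hP.isIdempotentElem.eq, trace_mul_comm,
    Matrix.mul_assoc, hQ.isIdempotentElem.eq]

variable [DecidableEq α]

theorem frobSq_mul_add_frobSq_one_sub_mul (hP : IsStarProjection P) (M : Matrix α β ℂ) :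
    frobSq (P * M) + frobSq ((1 - P) * M) = frobSq M := by
  have horth : ((P * M)ᴴ * ((1 - P) * M)).trace = 0 := by
    rw [conjTranspose_mul, hP.conjTranspose_eq, Matrix.mul_assoc, ← Matrix.mul_assoc P,
      hP.mul_one_sub_self, Matrix.zero_mul, Matrix.mul_zero, trace_zero]
  rw [← frobSq_add_of_trace_eq_zero horth, ← Matrix.add_mul, add_sub_cancel, Matrix.one_mul]

theorem frobSq_mul_add_frobSq_mul_one_sub (hP : IsStarProjection P) (M : Matrix β α ℂ) :
    frobSq (M * P) + frobSq (M * (1 - P)) = frobSq M := by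
  rw [← frobSq_conjTranspose (M * P), ← frobSq_conjTranspose (M * (1 - P)),
    ← frobSq_conjTranspose M, conjTranspose_mul, conjTranspose_mul, conjTranspose_sub,
    conjTranspose_one, hP.conjTranspose_eq]
  exact hP.frobSq_mul_add_frobSq_one_sub_mul Mᴴ

/-- The two sides are `tr Q - tr (P Q)` and `tr P - tr (P Q)`. -/
theorem frobSq_one_sub_mul_eq_of_trace_eq (hP : IsStarProjection P) (hQ : IsStarProjection Q)
    (htr : P.trace = Q.trace) : frobSq ((1 - P) * Q) = frobSq (P * (1 - Q)) := by
  rw [hP.one_sub.frobSq_mul_eq_re_trace hQ, hP.frobSq_mul_eq_re_trace hQ.one_sub,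
    Matrix.sub_mul, Matrix.mul_sub, Matrix.one_mul, Matrix.mul_one, trace_sub, trace_sub, htr]

end IsStarProjection

namespace IsMoorePenrose

variable {M : Matrix α β ℂ} {X : Matrix β α ℂ}

theorem isStarProjection_mul_dag (h : IsMoorePenrose M X) : IsStarProjection (M * X) :=
  ⟨by rw [IsIdempotentElem, ← Matrix.mul_assoc, h.1], h.2.2.1⟩

theorem isStarProjection_dag_mul (h : IsMoorePenrose M X) : IsStarProjection (X * M) :=
  ⟨by rw [IsIdempotentElem, ← Matrix.mul_assoc, h.2.1], h.2.2.2⟩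

theorem dag_mul_dag (h : IsMoorePenrose M X) : X * M * X = X := h.2.1

theorem dag_mul_mul_dag (h : IsMoorePenrose M X) : X * (M * X) = X := by
  rw [← Matrix.mul_assoc, h.2.1]

theorem trace_mul_dag [DecidableEq α] (h : IsMoorePenrose M X) : (M * X).trace = M.rank := by
  rw [trace_eq_rank_of_isIdempotentElem h.isStarProjection_mul_dag.isIdempotentElem]
  refine congrArg _ (le_antisymm (rank_mul_le_left M X) ?_)
  conv_lhs => rw [← h.1]
  exact rank_mul_le_left _ _

theorem trace_dag_mul [DecidableEq β] (h : IsMoorePenrose M X) : (X * M).trace = M.rank := by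
  rw [trace_eq_rank_of_isIdempotentElem h.isStarProjection_dag_mul.isIdempotentElem]
  refine congrArg _ (le_antisymm (rank_mul_le_right X M) ?_)
  conv_lhs => rw [← h.1, Matrix.mul_assoc]
  exact rank_mul_le_right _ _

theorem one_sub_mul_dag_mul [DecidableEq α] (h : IsMoorePenrose M X) : (1 - M * X) * M = 0 := by
  rw [Matrix.sub_mul, Matrix.one_mul, h.1, sub_self]

theorem mul_one_sub_dag_mul [DecidableEq β] (h : IsMoorePenrose M X) : M * (1 - X * M) = 0 := by
  rw [Matrix.mul_sub, Matrix.mul_one, ← Matrix.mul_assoc, h.1, sub_self]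

theorem one_sub_mul_dag_mul_conjTranspose [DecidableEq α] (h : IsMoorePenrose M X) :
    (1 - M * X) * Xᴴ = 0 := by
  rw [← h.isStarProjection_mul_dag.one_sub.conjTranspose_eq, ← conjTranspose_mul, Matrix.mul_sub,
    Matrix.mul_one, ← Matrix.mul_assoc, h.dag_mul_dag, sub_self, conjTranspose_zero]

theorem conjTranspose_mul_one_sub_dag_mul [DecidableEq β] (h : IsMoorePenrose M X) :
    Xᴴ * (1 - X * M) = 0 := by
  rw [← h.isStarProjection_dag_mul.one_sub.conjTranspose_eq, ← conjTranspose_mul, Matrix.sub_mul,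
    Matrix.one_mul, h.dag_mul_dag, sub_self, conjTranspose_zero]

end IsMoorePenrose

section Compression

variable {δ : Type*} [Fintype δ] [DecidableEq α] [DecidableEq β] [DecidableEq δ]
  {P : Matrix α α ℂ} {Q : Matrix β β ℂ} {L : Matrix γ α ℂ} {X : Matrix β δ ℂ}

theorem frobSq_one_sub_mul_add_frobSq_mul_one_sub_le (hP : IsStarProjection P)
    (hQ : IsStarProjection Q) (hX : Q * X = X) (M : Matrix α β ℂ) :
    spec L ^ 2 * frobSq ((1 - P) * M * X) + spec X ^ 2 * frobSq (L * M * (1 - Q)) ≤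
      spec X ^ 2 * spec L ^ 2 * frobSq M - spec L ^ 2 * frobSq (P * M * X) := by
  have hsplitP := hP.frobSq_mul_add_frobSq_one_sub_mul (M * X)
  have hsplitQ := hQ.frobSq_mul_add_frobSq_mul_one_sub M
  have hMX : frobSq (M * X) ≤ frobSq (M * Q) * spec X ^ 2 := by
    simpa only [Matrix.mul_assoc, hX] using frobSq_mul_le_right (M * Q) X
  have hLM : frobSq (L * M * (1 - Q)) ≤ spec L ^ 2 * frobSq (M * (1 - Q)) := by
    simpa only [Matrix.mul_assoc] using frobSq_mul_le_left L (M * (1 - Q))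
  simp only [Matrix.mul_assoc] at hsplitP hLM ⊢
  linarith [mul_le_mul_of_nonneg_left hMX (sq_nonneg (spec L)),
    mul_le_mul_of_nonneg_left hLM (sq_nonneg (spec X)),
    congrArg (spec L ^ 2 * ·) hsplitP, congrArg (spec X ^ 2 * spec L ^ 2 * ·) hsplitQ]

theorem frobSq_one_sub_mul_add_frobSq_mul_one_sub_le' [DecidableEq γ] (hP : IsStarProjection P)
    (hQ : IsStarProjection Q) (hL : L * P = L) (M : Matrix α β ℂ) :
    spec L ^ 2 * frobSq ((1 - P) * M * X) + spec X ^ 2 * frobSq (L * M * (1 - Q)) ≤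
      spec X ^ 2 * spec L ^ 2 * frobSq M - spec X ^ 2 * frobSq (L * M * Q) := by
  have hPL : P * Lᴴ = Lᴴ := by rw [← hP.conjTranspose_eq, ← conjTranspose_mul, hL]
  have h := frobSq_one_sub_mul_add_frobSq_mul_one_sub_le hQ hP (L := Xᴴ) hPL Mᴴ
  rw [← frobSq_conjTranspose ((1 - Q) * Mᴴ * Lᴴ), ← frobSq_conjTranspose (Xᴴ * Mᴴ * (1 - P)),
    ← frobSq_conjTranspose (Q * Mᴴ * Lᴴ)] at h
  simp only [conjTranspose_mul, conjTranspose_sub, conjTranspose_one, conjTranspose_conjTranspose,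
    hP.conjTranspose_eq, hQ.conjTranspose_eq, spec_conjTranspose, frobSq_conjTranspose,
    Matrix.mul_assoc] at h ⊢
  linarith

theorem frobSq_one_sub_mul_add_frobSq_mul_one_sub_le_sub_max [DecidableEq γ] (hP : IsStarProjection P)
    (hQ : IsStarProjection Q) (hL : L * P = L) (hX : Q * X = X) (M : Matrix α β ℂ) :
    spec L ^ 2 * frobSq ((1 - P) * M * X) + spec X ^ 2 * frobSq (L * M * (1 - Q)) ≤
      spec X ^ 2 * spec L ^ 2 * frobSq M -
        max (spec L ^ 2 * frobSq (P * M * X)) (spec X ^ 2 * frobSq (L * M * Q)) := by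
  rw [le_sub_comm]
  exact max_le (le_sub_comm.mp (frobSq_one_sub_mul_add_frobSq_mul_one_sub_le hP hQ hX M))
    (le_sub_comm.mp (frobSq_one_sub_mul_add_frobSq_mul_one_sub_le' hP hQ hL M))

end Compression

section Perturbation

variable [DecidableEq α] {A B : Matrix α β ℂ} {Adag Bdag : Matrix β α ℂ}

theorem frobSq_dag_sub_dag [DecidableEq β] (hA : IsMoorePenrose A Adag) (hB : IsMoorePenrose B Bdag) :
    frobSq (Bdag - Adag) = frobSq (Bdag * (B - A) * Adag) + frobSq (Bdag * (1 - A * Adag)) +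
      frobSq ((1 - Bdag * B) * Adag) := by
  have hdecomp : Bdag - Adag =
      -(Bdag * (B - A) * Adag) + (Bdag * (1 - A * Adag) + -((1 - Bdag * B) * Adag)) := by
    simp only [Matrix.mul_sub, Matrix.sub_mul, Matrix.mul_one, Matrix.one_mul, Matrix.mul_assoc]
    abel
  have hBZ : Bdagᴴ * ((1 - Bdag * B) * Adag) = 0 := by
    rw [← Matrix.mul_assoc, hB.conjTranspose_mul_one_sub_dag_mul, Matrix.zero_mul]
  have hYX : Bdag * (1 - A * Adag) * (Bdag * (B - A) * Adag)ᴴ = 0 := by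
    rw [conjTranspose_mul, Matrix.mul_assoc, ← Matrix.mul_assoc (1 - A * Adag),
      hA.one_sub_mul_dag_mul_conjTranspose, Matrix.zero_mul, Matrix.mul_zero]
  have hXZ : (Bdag * (B - A) * Adag)ᴴ * ((1 - Bdag * B) * Adag) = 0 := by
    rw [conjTranspose_mul, conjTranspose_mul, Matrix.mul_assoc, Matrix.mul_assoc, hBZ,
      Matrix.mul_zero, Matrix.mul_zero]
  have hYZ : (Bdag * (1 - A * Adag))ᴴ * ((1 - Bdag * B) * Adag) = 0 := by
    rw [conjTranspose_mul, Matrix.mul_assoc, hBZ, Matrix.mul_zero]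
  rw [hdecomp, frobSq_add_of_trace_eq_zero, frobSq_add_of_trace_eq_zero, frobSq_neg, frobSq_neg,
    add_assoc]
  · rw [Matrix.mul_neg, hYZ, neg_zero, trace_zero]
  · rw [conjTranspose_neg, Matrix.neg_mul, Matrix.mul_add, Matrix.mul_neg, hXZ, neg_zero,
      add_zero, trace_neg, trace_mul_comm, hYX, trace_zero, neg_zero]

theorem frobSq_dag_mul_one_sub_le (hA : IsMoorePenrose A Adag) (hB : IsMoorePenrose B Bdag)
    (hrank : B.rank = A.rank) :
    frobSq (Bdag * (1 - A * Adag)) ≤ spec Bdag ^ 2 * frobSq ((1 - B * Bdag) * (B - A) * Adag) :=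
  calc frobSq (Bdag * (1 - A * Adag))
      = frobSq (Bdag * (B * Bdag * (1 - A * Adag))) := by
        rw [← Matrix.mul_assoc, hB.dag_mul_mul_dag]
    _ ≤ spec Bdag ^ 2 * frobSq (B * Bdag * (1 - A * Adag)) := frobSq_mul_le_left _ _
    _ = spec Bdag ^ 2 * frobSq ((1 - B * Bdag) * (A * Adag)) := by
        rw [hB.isStarProjection_mul_dag.frobSq_one_sub_mul_eq_of_trace_eq
          hA.isStarProjection_mul_dag (by rw [hB.trace_mul_dag, hA.trace_mul_dag, hrank])]
    _ = spec Bdag ^ 2 * frobSq ((1 - B * Bdag) * (B - A) * Adag) := by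
        rw [Matrix.mul_sub, hB.one_sub_mul_dag_mul, zero_sub, Matrix.neg_mul, frobSq_neg,
          Matrix.mul_assoc]

theorem frobSq_one_sub_dag_mul_mul_dag_le [DecidableEq β] (hA : IsMoorePenrose A Adag)
    (hB : IsMoorePenrose B Bdag) (hrank : B.rank = A.rank) :
    frobSq ((1 - Bdag * B) * Adag) ≤ spec Adag ^ 2 * frobSq (Bdag * (B - A) * (1 - Adag * A)) :=
  calc frobSq ((1 - Bdag * B) * Adag)
      = frobSq ((1 - Bdag * B) * (Adag * A) * Adag) := by
        rw [Matrix.mul_assoc _ (Adag * A), hA.dag_mul_dag]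
    _ ≤ frobSq ((1 - Bdag * B) * (Adag * A)) * spec Adag ^ 2 := frobSq_mul_le_right _ _
    _ = frobSq (Bdag * B * (1 - Adag * A)) * spec Adag ^ 2 := by
        rw [hB.isStarProjection_dag_mul.frobSq_one_sub_mul_eq_of_trace_eq
          hA.isStarProjection_dag_mul (by rw [hB.trace_dag_mul, hA.trace_dag_mul, hrank])]
    _ = spec Adag ^ 2 * frobSq (Bdag * (B - A) * (1 - Adag * A)) := by
        rw [Matrix.mul_sub Bdag, Matrix.sub_mul, Matrix.mul_assoc Bdag A, hA.mul_one_sub_dag_mul,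
          Matrix.mul_zero, sub_zero, mul_comm]

theorem frobSq_dag_sub_dag_le [DecidableEq β] (hA : IsMoorePenrose A Adag) (hB : IsMoorePenrose B Bdag)
    (hrank : B.rank = A.rank) :
    frobSq (Bdag - Adag) ≤ frobSq (Bdag * (B - A) * Adag) +
      (spec Adag ^ 2 * spec Bdag ^ 2 * frobSq (B - A) -
        max (spec Bdag ^ 2 * frobSq (B * Bdag * (B - A) * Adag))
          (spec Adag ^ 2 * frobSq (Bdag * (B - A) * Adag * A))) := by
  have hcompr := frobSq_one_sub_mul_add_frobSq_mul_one_sub_le_sub_max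
    hB.isStarProjection_mul_dag hA.isStarProjection_dag_mul hB.dag_mul_mul_dag hA.dag_mul_dag
    (B - A)
  rw [frobSq_dag_sub_dag hA hB, Matrix.mul_assoc (Bdag * (B - A)) Adag A]
  linarith [frobSq_dag_mul_one_sub_le hA hB hrank, frobSq_one_sub_dag_mul_mul_dag_le hA hB hrank]

end Perturbation

/-- Holds also when `a` or `b` vanishes, because then `x / 0 = 0`. -/
theorem sub_max_le_mul_sub_max_div {a b e x y : ℝ} (hx : 0 ≤ x) (hy : 0 ≤ y) :
    a ^ 2 * b ^ 2 * e - max (b ^ 2 * x) (a ^ 2 * y) ≤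
      a ^ 2 * b ^ 2 * (e - max (x / a ^ 2) (y / b ^ 2)) := by
  rw [mul_sub, sub_le_sub_iff_left, mul_max_of_nonneg _ _ (by positivity)]
  apply max_le_max
  · rcases eq_or_ne a 0 with rfl | ha
    · simpa using mul_nonneg (sq_nonneg b) hx
    · exact (by field_simp : a ^ 2 * b ^ 2 * (x / a ^ 2) = b ^ 2 * x).le
  · rcases eq_or_ne b 0 with rfl | hb
    · simpa using mul_nonneg (sq_nonneg a) hy
    · exact (by field_simp : a ^ 2 * b ^ 2 * (y / b ^ 2) = a ^ 2 * y).le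

theorem stmt6_general {m n : ℕ}
    (A B : Matrix (Fin m) (Fin n) ℂ)
    (Adag Bdag : Matrix (Fin n) (Fin m) ℂ)
    (hA : IsMoorePenrose A Adag) (hB : IsMoorePenrose B Bdag)
    (E : Matrix (Fin m) (Fin n) ℂ) (hE : E = B - A)
    (hrank : B.rank = A.rank)
    :
    frobSq (Bdag - Adag) ≤
      min
        (spec Adag ^ 2 * spec Bdag ^ 2
            * (frobSq E - max (frobSq (B * Bdag * E * Adag) / spec Adag ^ 2)
                (frobSq (Bdag * E * Adag * A) / spec Bdag ^ 2))
          + frobSq (Bdag * E * Adag))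
        (spec Adag ^ 2 * spec Bdag ^ 2
            * (frobSq E - max (frobSq (A * Adag * E * Bdag) / spec Bdag ^ 2)
                (frobSq (Adag * E * Bdag * B) / spec Adag ^ 2))
          + frobSq (Adag * E * Bdag)) := by
  subst hE
  have hAB := frobSq_dag_sub_dag_le hA hB hrank
  have hBA := frobSq_dag_sub_dag_le hB hA hrank.symm
  rw [← neg_sub B A, ← neg_sub Bdag Adag] at hBA
  simp only [Matrix.mul_neg, Matrix.neg_mul, frobSq_neg] at hBA
  refine le_min ?_ ?_
  · have := sub_max_le_mul_sub_max_div (a := spec Adag) (b := spec Bdag) (e := frobSq (B - A))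
      (frobSq_nonneg (B * Bdag * (B - A) * Adag)) (frobSq_nonneg (Bdag * (B - A) * Adag * A))
    linarith
  · have := sub_max_le_mul_sub_max_div (a := spec Bdag) (b := spec Adag) (e := frobSq (B - A))
      (frobSq_nonneg (A * Adag * (B - A) * Bdag)) (frobSq_nonneg (Adag * (B - A) * Bdag * B))
    linarith

theorem stmt6 {m n : ℕ}
    (A B : Matrix (Fin m) (Fin n) ℂ)
    (Adag Bdag : Matrix (Fin n) (Fin m) ℂ)
    (hA : IsMoorePenrose A Adag) (hB : IsMoorePenrose B Bdag)
    (E : Matrix (Fin m) (Fin n) ℂ) (hE : E = B - A)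
    (hA0 : A ≠ 0) (hB0 : B ≠ 0)
    (hrank : B.rank = A.rank)
    :
    frobSq (Bdag - Adag) ≤
      min
        (spec Adag ^ 2 * spec Bdag ^ 2
            * (frobSq E - max (frobSq (B * Bdag * E * Adag) / spec Adag ^ 2)
                (frobSq (Bdag * E * Adag * A) / spec Bdag ^ 2))
          + frobSq (Bdag * E * Adag))
        (spec Adag ^ 2 * spec Bdag ^ 2
            * (frobSq E - max (frobSq (A * Adag * E * Bdag) / spec Bdag ^ 2)
                (frobSq (Adag * E * Bdag * B) / spec Adag ^ 2))
          + frobSq (Adag * E * Bdag)) :=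
  stmt6_general A B Adag Bdag hA hB E hE hrank
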